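/- Let R be squarefree, c = R - ∂(R), and B squarefree and coprime to R. If cB - R∂(B) = 1, then ∂(RB) = RB - 1, i.e., RB is a primary pseudoperfect number. -/
import Mathlib


/-- Arithmetic derivative on squarefree integers: ∂(n) = ∑_{p ∣ n prime} n/p. -/
def ad (n : ℕ) : ℕ := ∑ p ∈ n.primeFactors, n / p

lemma ad_mul_coprime (R B : ℕ) (hR : R ≠ 0) (hB : B ≠ 0)
    (hcop : Nat.Coprime R B) : ad (R * B) = R * ad B + B * ad R := by
  unfold ad
  rw [Nat.primeFactors_mul hR hB,
    Finset.sum_union (Nat.Coprime.disjoint_primeFactors hcop)]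
  have h1 : ∑ p ∈ R.primeFactors, R * B / p = B * ∑ p ∈ R.primeFactors, R / p := by
    rw [Finset.mul_sum]
    refine Finset.sum_congr rfl fun p hp => ?_
    rw [Nat.mul_comm R B, Nat.mul_div_assoc B (Nat.dvd_of_mem_primeFactors hp)]
  have h2 : ∑ p ∈ B.primeFactors, R * B / p = R * ∑ p ∈ B.primeFactors, B / p := by
    rw [Finset.mul_sum]
    exact Finset.sum_congr rfl fun p hp =>
      Nat.mul_div_assoc R (Nat.dvd_of_mem_primeFactors hp)
  rw [h1, h2]; ring
theorem ambient_port (R B : ℕ) (hR : Squarefree R) (hB : Squarefree B)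
    (hcop : Nat.Coprime R B) (c : ℤ) (hc : c = (R : ℤ) - ad R)
    (hfill : c * B - R * ad B = 1) :
    (ad (R * B) : ℤ) = R * B - 1 := by
  rw [ad_mul_coprime R B hR.ne_zero hB.ne_zero hcop]
  push_cast
  subst hc
  linarith
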